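/- arXiv:1603.05380 — 2 statements merged into one kernel-verified Lean document; each statement's English description precedes it below -/
import Mathlib

section
/- Let p ≥ 2 be an integer and α ∈ ℝ. Any critical point V ∈ R^p of F^p_{m,α} satisfies (m−1) F^p_m(V) = α |V|²; in particular F^p_m(V) has the same sign as α, and F^p_m(V) = 0 when α = 0. -/
open scoped BigOperators
noncomputable section

/-- Internal (diffusion) part: sum of (X_{i+1} - X_i)^(1-m) over consecutive gaps. -/
def gapSum (m : ℝ) (p : ℕ) (X : EuclideanSpace ℝ (Fin p)) : ℝ :=
  ∑ i : Fin p, if h : (i : ℕ) + 1 < p then (X ⟨(i : ℕ) + 1, h⟩ - X i) ^ (1 - m) else 0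

/-- Interaction part: sum of |X_i - X_j|^(1-m) over ordered pairs i ≠ j. -/
def pairSum (m : ℝ) (p : ℕ) (X : EuclideanSpace ℝ (Fin p)) : ℝ :=
  ∑ i : Fin p, ∑ j : Fin p, if i ≠ j then |X i - X j| ^ (1 - m) else 0

/-- The discrete free energy F^p_m. -/
def FF (m χ : ℝ) (p : ℕ) (X : EuclideanSpace ℝ (Fin p)) : ℝ :=
  (m - 1)⁻¹ * gapSum m p X - (χ / (m - 1)) * pairSum m p X

/-- Membership in R^p: strictly increasing with zero mean. -/
def memR (p : ℕ) (X : EuclideanSpace ℝ (Fin p)) : Prop :=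
  (StrictMono fun i => X i) ∧ ∑ i, X i = 0

/-- The critical constant C_p, with 1/C_p the sup of the HLS ratio. -/
def Cp (m : ℝ) (p : ℕ) : ℝ :=
  (sSup {r : ℝ | ∃ X : EuclideanSpace ℝ (Fin p), memR p X ∧
    r = pairSum m p X / gapSum m p X})⁻¹

/-- The functional F^p_{m,α} with confining quadratic potential. -/
def FFa (m χ α : ℝ) (p : ℕ) (X : EuclideanSpace ℝ (Fin p)) : ℝ :=
  FF m χ p X + α / 2 * ‖X‖ ^ 2

/-- H^N_{m+1}(Y) = |∇F^N_m(Y)|² − ((m−1) F^N_m(Y))². -/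
def Hfun (m χ : ℝ) (N : ℕ) (Y : EuclideanSpace ℝ (Fin N)) : ℝ :=
  ‖gradient (FF m χ N) Y‖ ^ 2 - ((m - 1) * FF m χ N Y) ^ 2

/-- X : [0,T) → R^N is a solution of the gradient flow of F^N_m. -/
def isGFlow (m χ : ℝ) (N : ℕ) (T : ℝ) (X : ℝ → EuclideanSpace ℝ (Fin N)) : Prop :=
  ∀ t ∈ Set.Ico (0 : ℝ) T, memR N (X t) ∧
    HasDerivWithinAt X (-(gradient (FF m χ N) (X t))) (Set.Ico (0 : ℝ) T) t

/-- The gap Y_{i+1} - Y_i (0 if i+1 is out of range). -/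
def gapAt (N : ℕ) (Y : EuclideanSpace ℝ (Fin N)) (i : ℕ) : ℝ :=
  if h : i + 1 < N then Y ⟨i + 1, h⟩ - Y ⟨i, Nat.lt_of_succ_lt h⟩ else 0

/-
Euler's identity for homogeneous functions: `F^p_m` is positively homogeneous of degree `1 - m`
on increasing configurations and `|X|²` is homogeneous of degree `2`, so differentiating
`F^p_{m,α}(c V)` at `c = 1` gives `∇F^p_{m,α}(V) · V = (1 - m) F^p_m(V) + α |V|²`, which vanishes
at a critical point. A strictly increasing `V` is nonzero, and the signs follow from `m > 1`.
-/

open Topology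

theorem HasFDerivAt.apply_self_eq_of_homogeneous {E : Type*} [NormedAddCommGroup E]
    [NormedSpace ℝ E] {f : E → ℝ} {f' : E →L[ℝ] ℝ} {x : E} {k : ℝ} (hf : HasFDerivAt f f' x)
    (hhom : ∀ᶠ c in 𝓝 (1 : ℝ), f (c • x) = c ^ k * f x) :
    f' x = k * f x := by
  have hray : HasDerivAt (fun c : ℝ => f (c • x)) (f' x) 1 := by
    have hline : HasDerivAt (fun c : ℝ => c • x) x 1 := by
      simpa using (hasDerivAt_id (1 : ℝ)).smul_const x
    exact (one_smul ℝ x ▸ hf).comp_hasDerivAt 1 hline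
  have hpow : HasDerivAt (fun c : ℝ => c ^ k * f x) (k * f x) 1 := by
    simpa using (Real.hasDerivAt_rpow_const (x := 1) (p := k) (Or.inl one_ne_zero)).mul_const (f x)
  exact hray.unique (hpow.congr_of_eventuallyEq hhom)

section

variable {m : ℝ} {p : ℕ} {X : EuclideanSpace ℝ (Fin p)}

theorem differentiableAt_gapSum (hX : StrictMono fun i => X i) :
    DifferentiableAt ℝ (gapSum m p) X := by
  unfold gapSum
  refine DifferentiableAt.fun_sum fun i _ => ?_
  split_ifs with h
  · have hlt : X i < X ⟨(i : ℕ) + 1, h⟩ := hX (Fin.mk_lt_mk.2 (Nat.lt_succ_self _))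
    exact DifferentiableAt.rpow_const (by fun_prop) (Or.inl (sub_pos.2 hlt).ne')
  · exact differentiableAt_const 0

theorem differentiableAt_pairSum (hX : Function.Injective fun i => X i) :
    DifferentiableAt ℝ (pairSum m p) X := by
  unfold pairSum
  refine DifferentiableAt.fun_sum fun i _ => DifferentiableAt.fun_sum fun j _ => ?_
  split_ifs with h
  · have hne : X i - X j ≠ 0 := sub_ne_zero.2 (hX.ne h)
    have hdiff : DifferentiableAt ℝ (fun Y : EuclideanSpace ℝ (Fin p) => Y i - Y j) X := by
      fun_prop
    exact (hdiff.abs hne).rpow_const (Or.inl (abs_ne_zero.2 hne))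
  · exact differentiableAt_const 0

theorem differentiableAt_FF {χ : ℝ} (hX : StrictMono fun i => X i) :
    DifferentiableAt ℝ (FF m χ p) X :=
  ((differentiableAt_gapSum hX).const_mul _).sub
    ((differentiableAt_pairSum hX.injective).const_mul _)

theorem gapSum_smul (hX : Monotone fun i => X i) {c : ℝ} (hc : 0 ≤ c) :
    gapSum m p (c • X) = c ^ (1 - m) * gapSum m p X := by
  unfold gapSum
  rw [Finset.mul_sum]
  refine Finset.sum_congr rfl fun i _ => ?_
  split_ifs with h
  · have hle : X i ≤ X ⟨(i : ℕ) + 1, h⟩ := hX (Fin.mk_le_mk.2 (Nat.le_succ i))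
    simp only [PiLp.smul_apply, smul_eq_mul]
    rw [← mul_sub, Real.mul_rpow hc (sub_nonneg.2 hle)]
  · rw [mul_zero]

theorem pairSum_smul {c : ℝ} (hc : 0 ≤ c) :
    pairSum m p (c • X) = c ^ (1 - m) * pairSum m p X := by
  unfold pairSum
  simp only [Finset.mul_sum, mul_ite, mul_zero, PiLp.smul_apply, smul_eq_mul, ← mul_sub, abs_mul,
    abs_of_nonneg hc, Real.mul_rpow hc (abs_nonneg _)]

theorem FF_smul {χ : ℝ} (hX : Monotone fun i => X i) {c : ℝ} (hc : 0 ≤ c) :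
    FF m χ p (c • X) = c ^ (1 - m) * FF m χ p X := by
  rw [FF, FF, gapSum_smul hX hc, pairSum_smul hc]
  ring

theorem FF_mul_eq_of_gradient_FFa_eq_zero {χ α : ℝ} (hX : StrictMono fun i => X i)
    (hcrit : gradient (FFa m χ α p) X = 0) :
    (m - 1) * FF m χ p X = α * ‖X‖ ^ 2 := by
  have hFF := (differentiableAt_FF (χ := χ) (m := m) hX).hasFDerivAt
  have hnorm := (hasStrictFDerivAt_norm_sq X).hasFDerivAt
  have hFFa : HasFDerivAt (FFa m χ α p)
      (fderiv ℝ (FF m χ p) X + (α / 2) • (2 • innerSL ℝ X)) X :=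
    hFF.add (hnorm.const_mul (α / 2))
  have hzero : fderiv ℝ (FF m χ p) X + (α / 2) • (2 • innerSL ℝ X) = 0 := by
    rw [← hFFa.fderiv, ← toDual_gradient, hcrit, map_zero]
  have hEulerFF := hFF.apply_self_eq_of_homogeneous (k := 1 - m) <|
    (lt_mem_nhds one_pos).mono fun c hc => FF_smul hX.monotone hc.le
  have hEulerNorm := hnorm.apply_self_eq_of_homogeneous (k := 2) <|
    (lt_mem_nhds one_pos).mono fun c hc => by
      rw [norm_smul, mul_pow, Real.norm_of_nonneg hc.le, Real.rpow_two]
  have hradial := DFunLike.congr_fun hzero X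
  rw [add_apply, smul_apply, zero_apply, smul_eq_mul] at hradial
  linear_combination -hradial + hEulerFF + α / 2 * hEulerNorm

end

theorem stmt6_general (m χ : ℝ) (hm : 1 < m) (p : ℕ) (hp : 2 ≤ p) (α : ℝ)
    (V : EuclideanSpace ℝ (Fin p)) (hV : memR p V)
    (hcrit : gradient (FFa m χ α p) V = 0) :
    (m - 1) * FF m χ p V = α * ‖V‖ ^ 2 ∧
    (0 < α → 0 < FF m χ p V) ∧ (α < 0 → FF m χ p V < 0) ∧ (α = 0 → FF m χ p V = 0) := by
  have hEuler := FF_mul_eq_of_gradient_FFa_eq_zero hV.1 hcrit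
  have hV0 : V ≠ 0 := fun h => by
    simpa [h] using hV.1 (Fin.mk_lt_mk.2 one_pos : (⟨0, by omega⟩ : Fin p) < ⟨1, by omega⟩)
  have hnorm : 0 < ‖V‖ ^ 2 := by positivity
  have hm' : 0 < m - 1 := sub_pos.2 hm
  have hFF : FF m χ p V = α * ‖V‖ ^ 2 / (m - 1) := by
    rw [eq_div_iff hm'.ne', ← hEuler, mul_comm]
  refine ⟨hEuler, fun hα => ?_, fun hα => ?_, fun hα => ?_⟩
  · rw [hFF]; exact div_pos (mul_pos hα hnorm) hm'
  · rw [hFF]; exact div_neg_of_neg_of_pos (mul_neg_of_neg_of_pos hα hnorm) hm'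
  · rw [hFF, hα, zero_mul, zero_div]

theorem stmt6 (m χ : ℝ) (hm : 1 < m) (hχ : 0 < χ) (p : ℕ) (hp : 2 ≤ p) (α : ℝ)
    (V : EuclideanSpace ℝ (Fin p)) (hV : memR p V)
    (hcrit : gradient (FFa m χ α p) V = 0) :
    (m - 1) * FF m χ p V = α * ‖V‖ ^ 2 ∧
    (0 < α → 0 < FF m χ p V) ∧ (α < 0 → FF m χ p V < 0) ∧ (α = 0 → FF m χ p V = 0) :=
  stmt6_general m χ hm p hp α V hV hcrit
end
end

section
/- Let p ≥ 2 be an integer and suppose χ > C_p. Then for every α ≥ 0 the functional F^p_{m,α} has no critical point in R^p; in particular (taking α = 0) F^p_m has no critical point in R^p. -/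
open scoped BigOperators
noncomputable section

/-!
Let `V ∈ R^p` be a critical point and `X ∈ R^p` arbitrary. Differentiate `F^p_{m,α}` at `V` in the
increasing direction `W` whose gaps are `(X_{l+1} - X_l)^{1-m} (V_{l+1} - V_l)^m`. The diffusion
part contributes exactly `-gapSum X`; by Radon's inequality each interaction term
`(V_i - V_j)^{-m} (W_i - W_j)` is at least `(X_i - X_j)^{1-m}`; and the confinement part
`α ⟪V, W⟫` is nonnegative by Chebyshev's sum inequality, since `V` and `W` increase and `V` has
zero sum. Hence `χ · pairSum X ≤ gapSum X` on all of `R^p`, that is, `χ ≤ C_p`.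
-/

open Finset
open scoped RealInnerProductSpace

theorem radon_inequality {ι : Type*} {s : Finset ι} (hs : s.Nonempty) {m : ℝ} (hm : 1 < m)
    {a b : ι → ℝ} (ha : ∀ i ∈ s, 0 ≤ a i) (hb : ∀ i ∈ s, 0 < b i) :
    (∑ i ∈ s, a i) ^ m * (∑ i ∈ s, b i) ^ (1 - m) ≤ ∑ i ∈ s, b i ^ (1 - m) * a i ^ m := by
  set A := ∑ i ∈ s, a i
  set B := ∑ i ∈ s, b i
  have hA : 0 ≤ A := sum_nonneg ha
  have hB : 0 < B := sum_pos hb hs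
  -- Jensen for `x ↦ x ^ m` at the points `a i / b i` with weights `b i / B`
  have jensen := Real.rpow_arith_mean_le_arith_mean_rpow s (fun i => b i / B)
    (fun i => a i / b i) (fun i hi => div_nonneg (hb i hi).le hB.le)
    (by rw [← sum_div, div_self hB.ne']) (fun i hi => div_nonneg (ha i hi) (hb i hi).le) hm.le
  have mean : ∑ i ∈ s, b i / B * (a i / b i) = A / B := by
    rw [sum_div]
    exact sum_congr rfl fun i hi => by field_simp [(hb i hi).ne']
  have power_mean : ∑ i ∈ s, b i / B * (a i / b i) ^ m
      = (∑ i ∈ s, b i ^ (1 - m) * a i ^ m) / B := by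
    rw [sum_div]
    refine sum_congr rfl fun i hi => ?_
    rw [Real.div_rpow (ha i hi) (hb i hi).le, Real.rpow_sub (hb i hi), Real.rpow_one]
    field_simp
  rw [mean, power_mean, Real.div_rpow hA hB.le, div_le_div_iff₀ (by positivity) hB] at jensen
  calc A ^ m * B ^ (1 - m) = A ^ m * B / B ^ m := by
        rw [Real.rpow_sub hB, Real.rpow_one]; ring
    _ ≤ ∑ i ∈ s, b i ^ (1 - m) * a i ^ m := by
        rw [div_le_iff₀ (by positivity)]; linarith

theorem sum_mul_nonneg_of_monotone {ι : Type*} [Fintype ι] [LinearOrder ι] {f g : ι → ℝ}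
    (hf : Monotone f) (hg : Monotone g) (hf₀ : ∑ i, f i = 0) : 0 ≤ ∑ i, f i * g i := by
  have chebyshev := (hf.monovary hg).sum_mul_sum_le_card_mul_sum
  rw [hf₀, zero_mul] at chebyshev
  rcases isEmpty_or_nonempty ι with hι | hι
  · simp
  · exact nonneg_of_mul_nonneg_right chebyshev (by simp [Fintype.card_pos])

theorem sum_ne_eq_two_mul_sum_lt {ι : Type*} [Fintype ι] [LinearOrder ι] (F : ι → ι → ℝ)
    (hF : ∀ i j, F i j = F j i) :
    ∑ i, ∑ j, (if i ≠ j then F i j else 0) = 2 * ∑ i, ∑ j, if j < i then F i j else 0 := by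
  have split : ∀ i j, (if i ≠ j then F i j else 0)
      = (if j < i then F i j else 0) + if i < j then F i j else 0 := by
    intro i j
    rcases lt_trichotomy i j with h | rfl | h
    · simp [h, h.ne, h.not_gt]
    · simp
    · simp [h, h.ne', h.not_gt]
  have swap : ∑ i, ∑ j, (if i < j then F i j else 0) = ∑ i, ∑ j, if j < i then F i j else 0 := by
    rw [sum_comm]
    exact sum_congr rfl fun i _ => sum_congr rfl fun j _ => by rw [hF]
  simp only [split, sum_add_distrib, swap]
  ring

section

variable {p : ℕ}

lemma gapAt_pos {V : EuclideanSpace ℝ (Fin p)} (hV : StrictMono fun i => V i) {l : ℕ}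
    (hl : l + 1 < p) : 0 < gapAt p V l := by
  rw [gapAt, dif_pos hl]
  exact sub_pos.mpr (hV (Fin.mk_lt_mk.mpr l.lt_succ_self))

lemma gapAt_nonneg {V : EuclideanSpace ℝ (Fin p)} (hV : Monotone fun i => V i) (l : ℕ) :
    0 ≤ gapAt p V l := by
  unfold gapAt
  split_ifs
  · exact sub_nonneg.mpr (hV (Fin.mk_le_mk.mpr l.le_succ))
  · exact le_rfl

lemma sum_Ico_gapAt (V : EuclideanSpace ℝ (Fin p)) {i j : Fin p} (hji : j ≤ i) :
    ∑ l ∈ Ico (j : ℕ) i, gapAt p V l = V i - V j := by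
  set f : ℕ → ℝ := fun l => if h : l < p then V ⟨l, h⟩ else 0
  have hgap : ∀ l ∈ Ico (j : ℕ) i, gapAt p V l = f (l + 1) - f l := by
    intro l hl
    have hl' : l + 1 < p := by have := i.isLt; simp only [mem_Ico] at hl; omega
    simp [f, gapAt, hl', Nat.lt_of_succ_lt hl']
  rw [sum_congr rfl hgap, sum_Ico_eq_sub _ hji, sum_range_sub, sum_range_sub]
  simp [f]

def orderedPairSum (m : ℝ) (p : ℕ) (X : EuclideanSpace ℝ (Fin p)) : ℝ :=
  ∑ i : Fin p, ∑ j : Fin p, if j < i then (X i - X j) ^ (1 - m) else 0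

lemma pairSum_eq_two_mul_orderedPairSum (m : ℝ) {X : EuclideanSpace ℝ (Fin p)}
    (hX : StrictMono fun i => X i) : pairSum m p X = 2 * orderedPairSum m p X := by
  rw [pairSum, sum_ne_eq_two_mul_sum_lt _ fun i j => by rw [abs_sub_comm], orderedPairSum]
  refine congrArg _ (sum_congr rfl fun i _ => sum_congr rfl fun j _ => ?_)
  split_ifs with h
  · rw [abs_of_pos (sub_pos.mpr (hX h))]
  · rfl

lemma eventually_strictMono_nhds {V : EuclideanSpace ℝ (Fin p)} (hV : StrictMono fun i => V i) :
    ∀ᶠ X in nhds V, StrictMono fun i => X i := by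
  refine Filter.eventually_all.2 fun i => Filter.eventually_all.2 fun j => ?_
  by_cases hij : i < j
  · filter_upwards [(isOpen_lt (EuclideanSpace.proj i).continuous
      (EuclideanSpace.proj j).continuous).mem_nhds (hV hij)] with X hX _ using hX
  · exact Filter.Eventually.of_forall fun _ h => absurd h hij

lemma gapSum_pos (m : ℝ) (hp : 2 ≤ p) {X : EuclideanSpace ℝ (Fin p)}
    (hX : StrictMono fun i => X i) : 0 < gapSum m p X := by
  refine sum_pos' (fun i _ => ?_) ⟨⟨0, by omega⟩, mem_univ _, ?_⟩
  · split_ifs with h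
    · exact Real.rpow_nonneg (sub_pos.mpr (hX (Fin.mk_lt_mk.mpr i.val.lt_succ_self))).le _
    · exact le_rfl
  · rw [dif_pos (by simp; omega)]
    exact Real.rpow_pos_of_pos (sub_pos.mpr (hX (Fin.mk_lt_mk.mpr Nat.zero_lt_one))) _

lemma orderedPairSum_pos (m : ℝ) (hp : 2 ≤ p) {X : EuclideanSpace ℝ (Fin p)}
    (hX : StrictMono fun i => X i) : 0 < orderedPairSum m p X := by
  have term_nonneg : ∀ i j : Fin p, 0 ≤ if j < i then (X i - X j) ^ (1 - m) else 0 := by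
    intro i j
    split_ifs with h
    · exact Real.rpow_nonneg (sub_pos.mpr (hX h)).le _
    · exact le_rfl
  have h01 : (⟨0, by omega⟩ : Fin p) < ⟨1, by omega⟩ := Fin.mk_lt_mk.mpr Nat.zero_lt_one
  refine sum_pos' (fun i _ => sum_nonneg fun j _ => term_nonneg i j) ⟨⟨1, by omega⟩, mem_univ _,
    sum_pos' (fun j _ => term_nonneg _ j) ⟨⟨0, by omega⟩, mem_univ _, ?_⟩⟩
  rw [if_pos h01]
  exact Real.rpow_pos_of_pos (sub_pos.mpr (hX h01)) _

lemma exists_memR (p : ℕ) : ∃ X : EuclideanSpace ℝ (Fin p), memR p X := by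
  set c : ℝ := (∑ i : Fin p, (i : ℝ)) / p
  refine ⟨WithLp.toLp 2 fun i => (i : ℝ) - c, fun i j hij => ?_, ?_⟩
  · simpa using hij
  · rcases Nat.eq_zero_or_pos p with rfl | hp
    · simp
    · have hp' : (p : ℝ) ≠ 0 := Nat.cast_ne_zero.mpr hp.ne'
      simp [c, sum_sub_distrib, mul_div_cancel₀ _ hp']

lemma hasFDerivAt_rpow_sub (c : ℝ) {V : EuclideanSpace ℝ (Fin p)} {i j : Fin p}
    (h : V j < V i) :
    HasFDerivAt (fun X : EuclideanSpace ℝ (Fin p) => (X i - X j) ^ c)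
      ((c * (V i - V j) ^ (c - 1)) •
        (EuclideanSpace.proj (𝕜 := ℝ) i - EuclideanSpace.proj j)) V := by
  have hsub : HasFDerivAt (fun X : EuclideanSpace ℝ (Fin p) => X i - X j)
      (EuclideanSpace.proj i - EuclideanSpace.proj j : EuclideanSpace ℝ (Fin p) →L[ℝ] ℝ) V :=
    (EuclideanSpace.proj (𝕜 := ℝ) i).hasFDerivAt.fun_sub
      (EuclideanSpace.proj (𝕜 := ℝ) j).hasFDerivAt
  exact (Real.hasDerivAt_rpow_const (Or.inl (sub_pos.mpr h).ne')).comp_hasFDerivAt V hsub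

lemma hasFDerivAt_gapSum (m : ℝ) {V : EuclideanSpace ℝ (Fin p)} (hV : StrictMono fun i => V i) :
    ∃ L : EuclideanSpace ℝ (Fin p) →L[ℝ] ℝ, HasFDerivAt (gapSum m p) L V ∧ ∀ W,
      L W = (1 - m) * ∑ i : Fin p, if h : (i : ℕ) + 1 < p then
        (V ⟨i + 1, h⟩ - V i) ^ (-m) * (W ⟨i + 1, h⟩ - W i) else 0 := by
  refine ⟨∑ i : Fin p, if h : (i : ℕ) + 1 < p then
      ((1 - m) * (V ⟨i + 1, h⟩ - V i) ^ (1 - m - 1)) •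
        (EuclideanSpace.proj ⟨i + 1, h⟩ - EuclideanSpace.proj i) else 0,
    HasFDerivAt.fun_sum fun i _ => ?_, fun W => ?_⟩
  · by_cases h : (i : ℕ) + 1 < p
    · simp only [dif_pos h]
      exact hasFDerivAt_rpow_sub _ (hV (Fin.mk_lt_mk.mpr i.val.lt_succ_self))
    · simp only [dif_neg h]
      exact hasFDerivAt_const 0 V
  · simp [apply_dite (fun L : EuclideanSpace ℝ (Fin p) →L[ℝ] ℝ => L W), mul_sum, mul_dite,
      mul_assoc]

lemma hasFDerivAt_orderedPairSum (m : ℝ) {V : EuclideanSpace ℝ (Fin p)}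
    (hV : StrictMono fun i => V i) :
    ∃ L : EuclideanSpace ℝ (Fin p) →L[ℝ] ℝ, HasFDerivAt (orderedPairSum m p) L V ∧ ∀ W,
      L W = (1 - m) * ∑ i : Fin p, ∑ j : Fin p, if j < i then
        (V i - V j) ^ (-m) * (W i - W j) else 0 := by
  refine ⟨∑ i : Fin p, ∑ j : Fin p, if j < i then
      ((1 - m) * (V i - V j) ^ (1 - m - 1)) •
        (EuclideanSpace.proj i - EuclideanSpace.proj j) else 0,
    HasFDerivAt.fun_sum fun i _ => HasFDerivAt.fun_sum fun j _ => ?_, fun W => ?_⟩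
  · by_cases h : j < i
    · simp only [if_pos h]
      exact hasFDerivAt_rpow_sub _ (hV h)
    · simp only [if_neg h]
      exact hasFDerivAt_const 0 V
  · simp [apply_ite (fun L : EuclideanSpace ℝ (Fin p) →L[ℝ] ℝ => L W), mul_sum, mul_ite, mul_assoc]

lemma fderiv_FFa_apply {m : ℝ} (hm : m ≠ 1) (χ α : ℝ) {V : EuclideanSpace ℝ (Fin p)}
    (hV : StrictMono fun i => V i) (W : EuclideanSpace ℝ (Fin p)) :
    fderiv ℝ (FFa m χ α p) V W =
      -(∑ i : Fin p, if h : (i : ℕ) + 1 < p then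
          (V ⟨i + 1, h⟩ - V i) ^ (-m) * (W ⟨i + 1, h⟩ - W i) else 0)
      + 2 * χ * (∑ i : Fin p, ∑ j : Fin p, if j < i then (V i - V j) ^ (-m) * (W i - W j) else 0)
      + α * ⟪V, W⟫ := by
  obtain ⟨Lg, hLg, hLgW⟩ := hasFDerivAt_gapSum m hV
  obtain ⟨Lo, hLo, hLoW⟩ := hasFDerivAt_orderedPairSum m hV
  have model : FFa m χ α p =ᶠ[nhds V] fun X => (m - 1)⁻¹ * gapSum m p X
      - χ / (m - 1) * (2 * orderedPairSum m p X) + α / 2 * ‖X‖ ^ 2 := by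
    filter_upwards [eventually_strictMono_nhds hV] with X hX
    rw [FFa, FF, pairSum_eq_two_mul_orderedPairSum m hX]
  have hF := (((hLg.const_mul (m - 1)⁻¹).sub ((hLo.const_mul 2).const_mul (χ / (m - 1)))).add
    ((hasStrictFDerivAt_norm_sq V).hasFDerivAt.const_mul (α / 2))).congr_of_eventuallyEq model
  rw [hF.fderiv]
  have hm' : m - 1 ≠ 0 := sub_ne_zero.mpr hm
  simp only [add_apply, sub_apply, smul_apply, innerSL_apply_apply, hLgW, hLoW, smul_eq_mul,
    nsmul_eq_mul]
  field_simp
  ring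

def radonDirection (m : ℝ) (V X : EuclideanSpace ℝ (Fin p)) : EuclideanSpace ℝ (Fin p) :=
  WithLp.toLp 2 fun k => ∑ l ∈ range k, gapAt p X l ^ (1 - m) * gapAt p V l ^ m

lemma radonDirection_sub (m : ℝ) (V X : EuclideanSpace ℝ (Fin p)) {i j : Fin p} (hji : j ≤ i) :
    radonDirection m V X i - radonDirection m V X j
      = ∑ l ∈ Ico (j : ℕ) i, gapAt p X l ^ (1 - m) * gapAt p V l ^ m :=
  (sum_Ico_eq_sub _ hji).symm

lemma monotone_radonDirection (m : ℝ) {V X : EuclideanSpace ℝ (Fin p)}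
    (hV : Monotone fun i => V i) (hX : Monotone fun i => X i) :
    Monotone fun i => radonDirection m V X i :=
  fun _ _ hji => sum_le_sum_of_subset_of_nonneg (range_mono hji) fun l _ _ =>
    mul_nonneg (Real.rpow_nonneg (gapAt_nonneg hX l) _) (Real.rpow_nonneg (gapAt_nonneg hV l) _)

lemma sum_gap_radonDirection (m : ℝ) {V : EuclideanSpace ℝ (Fin p)}
    (hV : StrictMono fun i => V i) (X : EuclideanSpace ℝ (Fin p)) :
    (∑ i : Fin p, if h : (i : ℕ) + 1 < p then (V ⟨i + 1, h⟩ - V i) ^ (-m) *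
        (radonDirection m V X ⟨i + 1, h⟩ - radonDirection m V X i) else 0) = gapSum m p X := by
  refine sum_congr rfl fun i _ => ?_
  split_ifs with h
  · have hi : i < ⟨i + 1, h⟩ := Fin.mk_lt_mk.mpr i.val.lt_succ_self
    have hgap : 0 < V ⟨i + 1, h⟩ - V i := sub_pos.mpr (hV hi)
    rw [radonDirection_sub m V X hi.le]
    simp only [Nat.Ico_succ_singleton, sum_singleton, gapAt, dif_pos h, Fin.eta]
    rw [mul_left_comm, ← Real.rpow_add hgap, neg_add_cancel, Real.rpow_zero, mul_one]
  · rfl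

lemma rpow_sub_le_mul_radonDirection_sub {m : ℝ} (hm : 1 < m) {V X : EuclideanSpace ℝ (Fin p)}
    (hV : StrictMono fun i => V i) (hX : StrictMono fun i => X i) {i j : Fin p} (hji : j < i) :
    (X i - X j) ^ (1 - m)
      ≤ (V i - V j) ^ (-m) * (radonDirection m V X i - radonDirection m V X j) := by
  have hVij : 0 < V i - V j := sub_pos.mpr (hV hji)
  have radon := radon_inequality (s := Ico (j : ℕ) i) (a := gapAt p V) (b := gapAt p X)
    ⟨j, by simp [hji]⟩ hm (fun l _ => gapAt_nonneg hV.monotone l)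
    (fun l hl => gapAt_pos hX (by have := i.isLt; simp only [mem_Ico] at hl; omega))
  rw [sum_Ico_gapAt V hji.le, sum_Ico_gapAt X hji.le, ← radonDirection_sub m V X hji.le] at radon
  calc (X i - X j) ^ (1 - m)
        = (V i - V j) ^ (-m) * ((V i - V j) ^ m * (X i - X j) ^ (1 - m)) := by
        rw [← mul_assoc, ← Real.rpow_add hVij, neg_add_cancel, Real.rpow_zero, one_mul]
    _ ≤ _ := by gcongr

lemma orderedPairSum_le_radonDirection {m : ℝ} (hm : 1 < m) {V X : EuclideanSpace ℝ (Fin p)}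
    (hV : StrictMono fun i => V i) (hX : StrictMono fun i => X i) :
    orderedPairSum m p X ≤ ∑ i : Fin p, ∑ j : Fin p, if j < i then
      (V i - V j) ^ (-m) * (radonDirection m V X i - radonDirection m V X j) else 0 :=
  sum_le_sum fun i _ => sum_le_sum fun j _ => by
    split_ifs with h
    · exact rpow_sub_le_mul_radonDirection_sub hm hV hX h
    · exact le_rfl

lemma mul_pairSum_le_gapSum_of_gradient_eq_zero {m χ α : ℝ} (hm : 1 < m) (hχ : 0 ≤ χ)
    (hα : 0 ≤ α) {V : EuclideanSpace ℝ (Fin p)} (hV : memR p V)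
    (hcrit : gradient (FFa m χ α p) V = 0) {X : EuclideanSpace ℝ (Fin p)}
    (hX : StrictMono fun i => X i) : χ * pairSum m p X ≤ gapSum m p X := by
  set W := radonDirection m V X
  have hderiv : fderiv ℝ (FFa m χ α p) V W = 0 := by
    rw [show fderiv ℝ (FFa m χ α p) V = 0 by simpa [gradient] using hcrit]
    rfl
  rw [fderiv_FFa_apply hm.ne' χ α hV.1 W, sum_gap_radonDirection m hV.1 X] at hderiv
  have hinner : 0 ≤ ⟪V, W⟫ := by
    simpa [PiLp.inner_apply, mul_comm] using sum_mul_nonneg_of_monotone hV.1.monotone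
      (monotone_radonDirection m hV.1.monotone hX.monotone) hV.2
  have hpair := orderedPairSum_le_radonDirection hm hV.1 hX
  rw [pairSum_eq_two_mul_orderedPairSum m hX]
  nlinarith [mul_le_mul_of_nonneg_left hpair hχ, mul_nonneg hα hinner]

lemma le_Cp_of_forall_mul_pairSum_le {m χ : ℝ} (hχ : 0 < χ) (hp : 2 ≤ p)
    (h : ∀ X : EuclideanSpace ℝ (Fin p), memR p X → χ * pairSum m p X ≤ gapSum m p X) :
    χ ≤ Cp m p := by
  set S := {r : ℝ | ∃ X : EuclideanSpace ℝ (Fin p), memR p X ∧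
    r = pairSum m p X / gapSum m p X}
  have hbound : ∀ r ∈ S, r ≤ χ⁻¹ := by
    rintro r ⟨X, hX, rfl⟩
    rw [div_le_iff₀ (gapSum_pos m hp hX.1), inv_mul_eq_div, le_div_iff₀ hχ, mul_comm]
    exact h X hX
  obtain ⟨X, hX⟩ := exists_memR p
  have hpos : 0 < pairSum m p X / gapSum m p X := by
    rw [pairSum_eq_two_mul_orderedPairSum m hX.1]
    exact div_pos (mul_pos two_pos (orderedPairSum_pos m hp hX.1)) (gapSum_pos m hp hX.1)
  have hsSup : 0 < sSup S := hpos.trans_le (le_csSup ⟨χ⁻¹, hbound⟩ ⟨X, hX, rfl⟩)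
  have := inv_anti₀ hsSup (csSup_le ⟨_, X, hX, rfl⟩ hbound)
  rwa [inv_inv] at this

end

theorem stmt10 (m χ : ℝ) (hm : 1 < m) (hχ : 0 < χ) (p : ℕ) (hp : 2 ≤ p)
    (hgt : Cp m p < χ) :
    (∀ α : ℝ, 0 ≤ α →
      ¬ ∃ V : EuclideanSpace ℝ (Fin p), memR p V ∧ gradient (FFa m χ α p) V = 0) ∧
    ¬ ∃ V : EuclideanSpace ℝ (Fin p), memR p V ∧ gradient (FF m χ p) V = 0 := by
  have no_critical : ∀ α : ℝ, 0 ≤ α →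
      ¬ ∃ V : EuclideanSpace ℝ (Fin p), memR p V ∧ gradient (FFa m χ α p) V = 0 := by
    rintro α hα ⟨V, hV, hcrit⟩
    exact hgt.not_ge (le_Cp_of_forall_mul_pairSum_le hχ hp fun X hX =>
      mul_pairSum_le_gapSum_of_gradient_eq_zero hm hχ.le hα hV hcrit hX.1)
  refine ⟨no_critical, ?_⟩
  have hFFa : FFa m χ 0 p = FF m χ p := funext fun X => by simp [FFa]
  simpa [hFFa] using no_critical 0 le_rfl
end
end
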